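/- arXiv:1808.03574 — 2 statements merged into one kernel-verified Lean document; each statement's English description precedes it below -/
import Mathlib

section
/- Let (J,R,Q) be a DH triple of size n such that every eigenvalue of (J−R)Q has negative real part, and let B ∈ ℂ^{n×m}, C ∈ ℂ^{p×n}. For ω ∈ ℝ set G_Q(ω) := C·(iω·I_n − (J−R)Q)⁻¹·(J−R)·B (the matrix iω·I_n − (J−R)Q is invertible by the stability assumption). Define S_Q := { ‖Δ‖₂ : Δ ∈ ℂ^{m×p} such that (J−R)(Q + BΔC) has an eigenvalue with zero real part }. Then S_Q is nonempty if and only if G_Q(ω) ≠ 0 for some ω ∈ ℝ; and in that case sup_{ω∈ℝ} ‖G_Q(ω)‖₂ is finite and positive and inf S_Q = ( sup_{ω∈ℝ} ‖G_Q(ω)‖₂ )⁻¹. -/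
open Matrix
open scoped ComplexOrder

/-- Spectral norm (largest singular value, ℓ²→ℓ² operator norm) of a complex matrix. -/
noncomputable def sNorm {p q : ℕ} (M : Matrix (Fin p) (Fin q) ℂ) : ℝ :=
  ‖LinearMap.toContinuousLinearMap (Matrix.toEuclideanLin M)‖

/-!
A perturbation `Q ↦ Q + BΔC` moves an eigenvalue onto the imaginary axis at `iω` exactly when
`det (1 - Δ G_Q(ω)) = 0` (Weinstein–Aronszajn applied to the resolvent of `(J - R)Q`). For a
single matrix `G`, a `Δ` with `det (1 - ΔG) = 0` has `‖Δ‖ ‖G‖ ≥ 1` by the Neumann series, and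
`Δ = Gᴴ / ‖G‖²` attains equality because `‖G‖² = ‖GᴴG‖` is an eigenvalue of `GᴴG`. Finally
`‖G_Q(ω)‖` is continuous and tends to `0` as `|ω| → ∞` (the resolvent vanishes at infinity), so
its supremum is attained, and the infimum over all `ω` is the reciprocal of the maximum.
-/

open Filter Topology Complex
open scoped Matrix.Norms.L2Operator MatrixOrder

theorem sNorm_eq_norm {p q : ℕ} (M : Matrix (Fin p) (Fin q) ℂ) : sNorm M = ‖M‖ := rfl

theorem Continuous.exists_forall_norm_le_of_tendsto_zero {β E : Type*} [TopologicalSpace β]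
    [Nonempty β] [SeminormedAddGroup E] {f : β → E} (hf : Continuous f)
    (hlim : Tendsto f (cocompact β) (𝓝 0)) : ∃ x, ∀ y, ‖f y‖ ≤ ‖f x‖ := by
  by_cases hpos : ∃ x₀, 0 < ‖f x₀‖
  · obtain ⟨x₀, hx₀⟩ := hpos
    have hev := (norm_zero (E := E) ▸ hlim.norm).eventually_lt_const hx₀
    exact hf.norm.exists_forall_ge' x₀ (hev.mono fun _ => le_of_lt)
  · push Not at hpos
    exact ⟨Classical.arbitrary β, fun y => (hpos y).trans (norm_nonneg _)⟩

theorem Complex.exists_re_eq_zero_iff {P : ℂ → Prop} :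
    (∃ μ : ℂ, μ.re = 0 ∧ P μ) ↔ ∃ ω : ℝ, P (I * ω) := by
  constructor
  · rintro ⟨μ, hμ, hP⟩
    exact ⟨μ.im, by convert hP; apply Complex.ext <;> simp [hμ]⟩
  · rintro ⟨ω, hP⟩
    exact ⟨I * ω, by simp, hP⟩

section Resolvent

variable {A : Type*} [NormedRing A] [NormedAlgebra ℂ A] [CompleteSpace A]

theorem continuous_resolvent_I_mul {a : A} (h : ∀ ω : ℝ, I * ω ∈ resolventSet ℂ a) :
    Continuous fun ω : ℝ => resolvent a (I * ω) := by
  refine continuous_iff_continuousAt.mpr fun ω => ?_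
  obtain ⟨u, hu⟩ := spectrum.mem_resolventSet_iff.mp (h ω)
  have hinv := NormedRing.inverse_continuousAt u
  rw [hu] at hinv
  exact hinv.comp (f := fun ω : ℝ => algebraMap ℂ A (I * ω) - a) (by fun_prop)

theorem tendsto_resolvent_I_mul_cocompact (a : A) :
    Tendsto (fun ω : ℝ => resolvent a (I * ω)) (cocompact ℝ) (𝓝 0) := by
  refine (spectrum.resolvent_tendsto_cobounded a).comp ?_
  rw [← tendsto_norm_atTop_iff_cobounded]
  simpa only [norm_mul, norm_I, one_mul, norm_real] using tendsto_norm_cocompact_atTop (E := ℝ)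

end Resolvent

namespace Matrix

section Field

variable {K : Type*} [Field K] {n : Type*} [Fintype n] [DecidableEq n]

theorem resolvent_eq_inv (A : Matrix n n K) (z : K) : resolvent A z = (z • 1 - A)⁻¹ := by
  rw [resolvent, nonsing_inv_eq_ringInverse, Algebra.algebraMap_eq_smul_one]

theorem mem_resolventSet_iff_det_sub_smul_ne_zero (A : Matrix n n K) (z : K) :
    z ∈ resolventSet K A ↔ (A - z • 1).det ≠ 0 := by
  rw [spectrum.mem_resolventSet_iff, Algebra.algebraMap_eq_smul_one, ← neg_sub, IsUnit.neg_iff,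
    isUnit_iff_isUnit_det, isUnit_iff_ne_zero]

theorem det_add_mul_mul_sub_smul_eq_zero_iff {m p : Type*} [Fintype m] [DecidableEq m]
    [Fintype p] {A : Matrix n n K} {z : K} (hz : z ∈ resolventSet K A) (D : Matrix n m K)
    (Δ : Matrix m p K) (C : Matrix p n K) :
    (A + D * Δ * C - z • 1).det = 0 ↔ (1 - Δ * (C * resolvent A z * D)).det = 0 := by
  have hF : IsUnit (z • 1 - A).det := (isUnit_iff_isUnit_det _).mp (by
    simpa [Algebra.algebraMap_eq_smul_one] using spectrum.mem_resolventSet_iff.mp hz)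
  have : A + D * Δ * C - z • 1 = -((z • 1 - A) + D * -(Δ * C)) := by
    simp only [Matrix.mul_neg, Matrix.mul_assoc]; abel
  rw [this, det_neg, det_add_mul _ _ hF, resolvent_eq_inv]
  simp only [Matrix.neg_mul, ← sub_eq_add_neg, Matrix.mul_assoc, mul_eq_zero, pow_eq_zero_iff',
    neg_eq_zero, one_ne_zero, false_and, false_or, hF.ne_zero]

end Field

variable {m p : Type*} [Fintype m] [DecidableEq m] [Fintype p] [DecidableEq p]

theorem one_le_norm_mul_norm_of_det_one_sub_mul_eq_zero {𝕜 : Type*} [RCLike 𝕜]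
    {Δ : Matrix m p 𝕜} {G : Matrix p m 𝕜} (h : (1 - Δ * G).det = 0) : 1 ≤ ‖Δ‖ * ‖G‖ := by
  by_contra! hlt
  have : IsUnit (1 - Δ * G) := isUnit_one_sub_of_norm_lt_one ((l2_opNorm_mul Δ G).trans_lt hlt)
  exact ((isUnit_iff_isUnit_det _).mp this).ne_zero h

theorem exists_norm_eq_inv_norm_and_det_one_sub_mul_eq_zero {G : Matrix p m ℂ} (hG : G ≠ 0) :
    ∃ Δ : Matrix m p ℂ, ‖Δ‖ = ‖G‖⁻¹ ∧ (1 - Δ * G).det = 0 := by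
  have : Nonempty m := by
    by_contra hm
    exact hG (by ext i j; exact (hm ⟨j⟩).elim)
  have hspec : ‖Gᴴ * G‖ ∈ spectrum ℝ (Gᴴ * G) := CStarAlgebra.norm_mem_spectrum_of_nonneg
    (nonneg_iff_posSemidef.mpr (posSemidef_conjTranspose_mul_self G))
  rw [l2_opNorm_conjTranspose_mul_self, spectrum.mem_iff, Algebra.algebraMap_eq_smul_one,
    ← Complex.coe_smul, isUnit_iff_isUnit_det, isUnit_iff_ne_zero, not_not] at hspec
  set c : ℂ := ((‖G‖ * ‖G‖ : ℝ) : ℂ)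
  have hc : c ≠ 0 := by simpa [c] using hG
  refine ⟨c⁻¹ • Gᴴ, ?_, ?_⟩
  · rw [norm_smul, l2_opNorm_conjTranspose, norm_inv, Complex.norm_real, Real.norm_eq_abs,
      abs_mul_self, mul_inv, inv_mul_cancel_right₀ (norm_ne_zero_iff.mpr hG)]
  · have : 1 - (c⁻¹ • Gᴴ) * G = c⁻¹ • (c • 1 - Gᴴ * G) := by
      rw [smul_sub, smul_smul, inv_mul_cancel₀ hc, one_smul, Matrix.smul_mul]
    rw [this, det_smul, hspec, mul_zero]

def destabilizingNorms {ι : Type*} (G : ι → Matrix p m ℂ) : Set ℝ :=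
  {x | ∃ Δ : Matrix m p ℂ, ‖Δ‖ = x ∧ ∃ i, (1 - Δ * G i).det = 0}

variable {ι : Type*} {G : ι → Matrix p m ℂ}

theorem destabilizingNorms_nonempty_iff : (destabilizingNorms G).Nonempty ↔ ∃ i, G i ≠ 0 := by
  constructor
  · rintro ⟨_, Δ, -, i, hi⟩
    refine ⟨i, fun h => ?_⟩
    simp [h] at hi
  · rintro ⟨i, hi⟩
    obtain ⟨Δ, -, hΔ⟩ := exists_norm_eq_inv_norm_and_det_one_sub_mul_eq_zero hi
    exact ⟨_, Δ, rfl, i, hΔ⟩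

theorem isLeast_destabilizingNorms {i₀ : ι} (hmax : ∀ i, ‖G i‖ ≤ ‖G i₀‖) (h₀ : G i₀ ≠ 0) :
    IsLeast (destabilizingNorms G) ‖G i₀‖⁻¹ := by
  obtain ⟨Δ₀, hΔ₀, hdet₀⟩ := exists_norm_eq_inv_norm_and_det_one_sub_mul_eq_zero h₀
  refine ⟨⟨Δ₀, hΔ₀, i₀, hdet₀⟩, ?_⟩
  rintro _ ⟨Δ, rfl, i, hi⟩
  rw [inv_le_iff_one_le_mul₀ (norm_pos_iff.mpr h₀)]
  calc 1 ≤ ‖Δ‖ * ‖G i‖ := one_le_norm_mul_norm_of_det_one_sub_mul_eq_zero hi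
    _ ≤ ‖Δ‖ * ‖G i₀‖ := by gcongr; exact hmax i

theorem sInf_destabilizingNorms_eq_inv_iSup {i₀ : ι} (hmax : ∀ i, ‖G i‖ ≤ ‖G i₀‖) :
    ((destabilizingNorms G).Nonempty ↔ ∃ i, G i ≠ 0) ∧
    ((destabilizingNorms G).Nonempty →
      BddAbove (Set.range fun i => ‖G i‖) ∧ 0 < (⨆ i, ‖G i‖) ∧
      sInf (destabilizingNorms G) = (⨆ i, ‖G i‖)⁻¹) := by
  have : Nonempty ι := ⟨i₀⟩
  have hbdd : BddAbove (Set.range fun i => ‖G i‖) := ⟨_, Set.forall_mem_range.2 hmax⟩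
  have hsup : ⨆ i, ‖G i‖ = ‖G i₀‖ := le_antisymm (ciSup_le hmax) (le_ciSup hbdd i₀)
  refine ⟨destabilizingNorms_nonempty_iff, fun hne => ?_⟩
  obtain ⟨i, hi⟩ := destabilizingNorms_nonempty_iff.mp hne
  have h₀ : G i₀ ≠ 0 := norm_pos_iff.mp ((norm_pos_iff.mpr hi).trans_le (hmax i))
  exact ⟨hbdd, hsup ▸ norm_pos_iff.mpr h₀, hsup ▸ (isLeast_destabilizingNorms hmax h₀).csInf_eq⟩

end Matrix

theorem unstructured_stability_radius_Q_general
    {n m p : ℕ}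
    (J R Q : Matrix (Fin n) (Fin n) ℂ)
    (hstab : ∀ μ : ℂ, ((J - R) * Q - μ • 1).det = 0 → μ.re < 0)
    (B : Matrix (Fin n) (Fin m) ℂ) (C : Matrix (Fin p) (Fin n) ℂ)
    (GQ : ℝ → Matrix (Fin p) (Fin m) ℂ)
    (hGQ : ∀ ω : ℝ, GQ ω =
      C * ((Complex.I * (ω : ℂ)) • (1 : Matrix (Fin n) (Fin n) ℂ) - (J - R) * Q)⁻¹
        * ((J - R) * B))
    (SQ : Set ℝ)
    (hSQ : SQ = {x | ∃ Δ : Matrix (Fin m) (Fin p) ℂ, sNorm Δ = x ∧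
      ∃ μ : ℂ, μ.re = 0 ∧ ((J - R) * (Q + B * Δ * C) - μ • 1).det = 0}) :
    (SQ.Nonempty ↔ ∃ ω : ℝ, GQ ω ≠ 0) ∧
    (SQ.Nonempty →
      BddAbove (Set.range fun ω : ℝ => sNorm (GQ ω)) ∧
      0 < (⨆ ω : ℝ, sNorm (GQ ω)) ∧
      sInf SQ = (⨆ ω : ℝ, sNorm (GQ ω))⁻¹) := by
  simp only [sNorm_eq_norm] at hSQ ⊢
  set A := (J - R) * Q
  have hres : ∀ ω : ℝ, I * ω ∈ resolventSet ℂ A := fun ω =>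
    (mem_resolventSet_iff_det_sub_smul_ne_zero A _).2 fun h => (hstab _ h).ne (by simp)
  have hG : GQ = fun ω : ℝ => C * resolvent A (I * ω) * ((J - R) * B) := by
    funext ω; rw [hGQ, resolvent_eq_inv]
  have hSQ' : SQ = destabilizingNorms GQ := by
    rw [hSQ]
    refine Set.ext fun x => exists_congr fun Δ => and_congr_right fun _ => ?_
    rw [Complex.exists_re_eq_zero_iff]
    refine exists_congr fun ω => ?_
    rw [Matrix.mul_add, ← Matrix.mul_assoc, ← Matrix.mul_assoc,
      det_add_mul_mul_sub_smul_eq_zero_iff (hres ω), congrFun hG ω]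
  have hcont : Continuous GQ := hG ▸
    (continuous_const.matrix_mul (continuous_resolvent_I_mul hres)).matrix_mul continuous_const
  have hlim : Tendsto GQ (cocompact ℝ) (𝓝 0) := by
    have hmul : Continuous fun X : Matrix (Fin n) (Fin n) ℂ => C * X * ((J - R) * B) :=
      (continuous_const.matrix_mul continuous_id).matrix_mul continuous_const
    simpa only [hG, Matrix.mul_zero, Matrix.zero_mul, Function.comp_def] using
      (hmul.tendsto 0).comp (tendsto_resolvent_I_mul_cocompact A)
  obtain ⟨ωs, hmax⟩ := hcont.exists_forall_norm_le_of_tendsto_zero hlim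
  exact hSQ' ▸ sInf_destabilizingNorms_eq_inv_iSup hmax

/-- For an asymptotically stable DH system `(J − R)Q`, the unstructured restricted stability
radius with respect to perturbations of `Q` is the reciprocal of `sup_ω ‖G_Q(ω)‖₂`, where
`G_Q(ω) = C (iω I − (J−R)Q)⁻¹ (J−R) B`; the perturbation set is nonempty iff `G_Q` is not
identically zero. -/
theorem unstructured_stability_radius_Q
    {n m p : ℕ}
    (J R Q : Matrix (Fin n) (Fin n) ℂ)
    (hJ : Jᴴ = -J) (hR : R.PosSemidef) (hQ : Q.PosDef)
    (hstab : ∀ μ : ℂ, ((J - R) * Q - μ • 1).det = 0 → μ.re < 0)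
    (B : Matrix (Fin n) (Fin m) ℂ) (C : Matrix (Fin p) (Fin n) ℂ)
    (GQ : ℝ → Matrix (Fin p) (Fin m) ℂ)
    (hGQ : ∀ ω : ℝ, GQ ω =
      C * ((Complex.I * (ω : ℂ)) • (1 : Matrix (Fin n) (Fin n) ℂ) - (J - R) * Q)⁻¹
        * ((J - R) * B))
    (SQ : Set ℝ)
    (hSQ : SQ = {x | ∃ Δ : Matrix (Fin m) (Fin p) ℂ, sNorm Δ = x ∧
      ∃ μ : ℂ, μ.re = 0 ∧ ((J - R) * (Q + B * Δ * C) - μ • 1).det = 0}) :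
    (SQ.Nonempty ↔ ∃ ω : ℝ, GQ ω ≠ 0) ∧
    (SQ.Nonempty →
      BddAbove (Set.range fun ω : ℝ => sNorm (GQ ω)) ∧
      0 < (⨆ ω : ℝ, sNorm (GQ ω)) ∧
      sInf SQ = (⨆ ω : ℝ, sNorm (GQ ω))⁻¹) :=
  unstructured_stability_radius_Q_general J R Q hstab B C GQ hGQ SQ hSQ
end

section
/- Let (J,R,Q) be a DH triple of size n, B ∈ ℂ^{n×m} of full column rank, ω̂ ∈ ℝ, and let W(λ) := (J−R)Q − λ·I_n be invertible at λ = iω̂. Let V_k ∈ ℂ^{n×k} have orthonormal columns such that every column of W(iω̂)⁻¹ B and of W(iω̂)⁻² B lies in the column space of V_k, and such that the first m columns of V_k form an orthonormal basis of the column space of W(iω̂)⁻¹ B. Set W_k := Q V_k (V_kᴴ Q V_k)⁻¹, J_k := W_kᴴ J W_k, R_k := W_kᴴ R W_k, Q_k := V_kᴴ Q V_k, B_k := W_kᴴ B, W_k(λ) := (J_k−R_k)Q_k − λ·I_k, and assume W_k(iω̂) is invertible. Assume H̃₀ := Bᴴ W(iω̂)⁻ᴴ Q B Bᴴ Q W(iω̂)⁻¹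 B and H̃_{k,0} := B_kᴴ W_k(iω̂)⁻ᴴ Q_k B_k B_kᴴ Q_k W_k(iω̂)⁻¹ B_k are positive definite, with lower triangular Cholesky factors L, L_k having positive real diagonals. Then L = L_k; consequently H₀ := L⁻¹L⁻ᴴ equals H_{k,0} := L_k⁻¹L_k⁻ᴴ, and H₁ := i(H̃₁ − H̃₁ᴴ) equals H_{k,1} := i(H̃_{k,1} − H̃_{k,1}ᴴ), where H̃₁ := L⁻¹ Bᴴ W(iω̂)⁻ᴴ Q B L⁻ᴴ and H̃_{k,1} := L_k⁻¹ B_kᴴ W_k(iω̂)⁻ᴴ Q_k B_k L_k⁻ᴴ. -/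
open Matrix
open scoped ComplexOrder

/-! With `W = Q V (Vᴴ Q V)⁻¹` one has `Wᴴ V = 1` and `W (Vᴴ Q V) = Q V`, so the reduced pencil is
the Petrov–Galerkin projection `W_k(iω̂) = Wᴴ W(iω̂) V`. If `V Z = W(iω̂)⁻¹ B`, this gives
`W_k(iω̂) Z = B_k`, so the reduced resolvent applied to `B_k` reproduces `Z`, and
`M := B_kᴴ Q_k W_k(iω̂)⁻¹ B_k = Bᴴ Q W(iω̂)⁻¹ B`. Both `H̃₀` and `H̃_{k,0}` equal `Mᴴ M`, so
they coincide, and so do their Cholesky factors: `L_k⁻¹ L` is lower triangular,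
unitary and has a positive diagonal, hence it is the identity. -/

theorem RCLike.eq_one_of_pos_of_mul_star_self_eq_one {𝕜 : Type*} [RCLike 𝕜] {d : 𝕜}
    (hd : 0 < d) (h : d * star d = 1) : d = 1 := by
  have hsq : ‖d‖ ^ 2 = 1 := by exact_mod_cast (RCLike.mul_conj d).symm.trans h
  have hnorm : ‖d‖ = 1 := (pow_eq_one_iff_of_nonneg (norm_nonneg d) two_ne_zero).mp hsq
  rw [← RCLike.norm_of_nonneg' hd.le, hnorm, RCLike.ofReal_one]

namespace Matrix

variable {ι R : Type*} [Fintype ι] [DecidableEq ι] [LinearOrder ι]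

theorem IsLowerTriangular.isDiag_of_mul_conjTranspose_eq_one [CommRing R] [StarRing R]
    {D : Matrix ι ι R} (hD : D.IsLowerTriangular) (h : D * Dᴴ = 1) : D.IsDiag := by
  have : Invertible D := invertibleOfRightInverse D Dᴴ h
  have hDH : Dᴴ.IsLowerTriangular := inv_eq_right_inv h ▸ blockTriangular_inv_of_blockTriangular hD
  intro i j hij
  rcases hij.lt_or_gt with hlt | hgt
  · exact hD hlt
  · simpa using congrArg star (hDH hgt)

theorem IsLowerTriangular.eq_of_mul_conjTranspose_eq {𝕜 : Type*} [RCLike 𝕜]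
    {L L' : Matrix ι ι 𝕜} (hL : L.IsLowerTriangular) (hL' : L'.IsLowerTriangular)
    (hLpos : ∀ i, 0 < L i i) (hL'pos : ∀ i, 0 < L' i i) (h : L * Lᴴ = L' * L'ᴴ) : L = L' := by
  have hL'det : IsUnit L'.det := by
    rw [det_of_isLowerTriangular L' hL', isUnit_iff_ne_zero]
    exact Finset.prod_ne_zero_iff.mpr fun i _ => (hL'pos i).ne'
  set D := L'⁻¹ * L
  have hLD : L' * D = L := mul_nonsing_inv_cancel_left _ _ hL'det
  have : Invertible L' := invertibleOfIsUnitDet L' hL'det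
  have hDlow : D.IsLowerTriangular := (blockTriangular_inv_of_blockTriangular hL').mul hL
  have hDunit : D * Dᴴ = 1 := by
    rw [conjTranspose_mul, conjTranspose_nonsing_inv]
    calc L'⁻¹ * L * (Lᴴ * L'ᴴ⁻¹) = L'⁻¹ * (L * Lᴴ) * L'ᴴ⁻¹ := by noncomm_ring
      _ = 1 := by
        rw [h, ← Matrix.mul_assoc, nonsing_inv_mul _ hL'det, Matrix.one_mul,
          mul_nonsing_inv _ (by rwa [det_conjTranspose, isUnit_star])]
  obtain ⟨d, hd⟩ : ∃ d, D = diagonal d :=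
    ⟨_, (hDlow.isDiag_of_mul_conjTranspose_eq_one hDunit).diagonal_diag.symm⟩
  rw [hd] at hLD hDunit
  have hd1 : ∀ i, d i = 1 := by
    intro i
    have hpos : L i i = L' i i * d i := by rw [← hLD, mul_diagonal]
    have hnorm : d i * star (d i) = 1 := by
      simpa [diagonal_conjTranspose] using congrFun (congrFun hDunit i) i
    refine RCLike.eq_one_of_pos_of_mul_star_self_eq_one ?_ hnorm
    exact pos_of_mul_pos_right (hpos ▸ hLpos i) (hL'pos i).le
  rw [← hLD, show d = fun _ => 1 from funext hd1, diagonal_one, Matrix.mul_one]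

section PetrovGalerkin

variable {n k m K : Type*} [Fintype n] [Fintype k] [DecidableEq k]
  [Field K] [StarRing K]

theorem conjTranspose_mul_inv_mul_self {Q : Matrix n n K} {V : Matrix n k K}
    (hQV : IsUnit (Vᴴ * Q * V).det) : (Q * V * (Vᴴ * Q * V)⁻¹)ᴴ * V = 1 := by
  have h : Vᴴ * (Q * V * (Vᴴ * Q * V)⁻¹) = 1 := by
    rw [← Matrix.mul_assoc, ← Matrix.mul_assoc, mul_nonsing_inv _ hQV]
  simpa using congrArg conjTranspose h

theorem conjTranspose_mul_sub_smul_one_mul [DecidableEq n] {A Q : Matrix n n K}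
    {V W : Matrix n k K} (s : K)
    (hWV : Wᴴ * V = 1) (hWQ : W * (Vᴴ * Q * V) = Q * V) :
    Wᴴ * (A * Q - s • 1) * V = Wᴴ * A * W * (Vᴴ * Q * V) - s • 1 := by
  rw [Matrix.mul_sub, Matrix.sub_mul, Matrix.mul_smul, Matrix.smul_mul, Matrix.mul_one, hWV,
    Matrix.mul_assoc (Wᴴ * A), hWQ]
  simp only [Matrix.mul_assoc]

theorem inv_mul_conjTranspose_mul_eq [DecidableEq n] {M : Matrix n n K} {V W : Matrix n k K}
    {B : Matrix n m K} {Z : Matrix k m K} (hM : IsUnit M.det) (hMk : IsUnit (Wᴴ * M * V).det)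
    (hZ : V * Z = M⁻¹ * B) : (Wᴴ * M * V)⁻¹ * (Wᴴ * B) = Z := by
  have h : Wᴴ * M * V * Z = Wᴴ * B := by
    rw [Matrix.mul_assoc, hZ, Matrix.mul_assoc, ← Matrix.mul_assoc M, mul_nonsing_inv _ hM,
      Matrix.one_mul]
  rw [← h, nonsing_inv_mul_cancel_left _ _ hMk]

theorem conjTranspose_mul_mul_inv_mul_eq [DecidableEq n] {M Q : Matrix n n K}
    {V W : Matrix n k K} {B : Matrix n m K} {Z : Matrix k m K} (hM : IsUnit M.det)
    (hMk : IsUnit (Wᴴ * M * V).det) (hWQ : W * (Vᴴ * Q * V) = Q * V) (hZ : V * Z = M⁻¹ * B) :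
    (Wᴴ * B)ᴴ * (Vᴴ * Q * V) * (Wᴴ * M * V)⁻¹ * (Wᴴ * B) = Bᴴ * Q * M⁻¹ * B := by
  rw [Matrix.mul_assoc _ _ (Wᴴ * B), inv_mul_conjTranspose_mul_eq hM hMk hZ, conjTranspose_mul,
    conjTranspose_conjTranspose, Matrix.mul_assoc Bᴴ, hWQ, Matrix.mul_assoc, Matrix.mul_assoc,
    hZ]
  simp only [Matrix.mul_assoc]

end PetrovGalerkin

end Matrix

theorem interpolation_cholesky_factors_general
    {n m k : ℕ}
    (J R Q : Matrix (Fin n) (Fin n) ℂ)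
    (hQ : Q.PosDef)
    (B : Matrix (Fin n) (Fin m) ℂ)
    (omg : ℝ)
    (Wm : Matrix (Fin n) (Fin n) ℂ)
    (hWm : Wm = (J - R) * Q - (Complex.I * (omg : ℂ)) • 1)
    (hWinv : IsUnit Wm.det)
    (V : Matrix (Fin n) (Fin k) ℂ) (hV : Vᴴ * V = 1)
    (hincl1 : ∃ Z : Matrix (Fin k) (Fin m) ℂ, V * Z = Wm⁻¹ * B)
    (Wk : Matrix (Fin n) (Fin k) ℂ) (hWk : Wk = Q * V * (Vᴴ * Q * V)⁻¹)
    (Jk Rk Qk : Matrix (Fin k) (Fin k) ℂ)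
    (hJk : Jk = Wkᴴ * J * Wk) (hRk : Rk = Wkᴴ * R * Wk) (hQk : Qk = Vᴴ * Q * V)
    (Bk : Matrix (Fin k) (Fin m) ℂ) (hBk : Bk = Wkᴴ * B)
    (Wkm : Matrix (Fin k) (Fin k) ℂ)
    (hWkm : Wkm = (Jk - Rk) * Qk - (Complex.I * (omg : ℂ)) • 1)
    (hWkinv : IsUnit Wkm.det)
    (H0t : Matrix (Fin m) (Fin m) ℂ) (hH0t : H0t = Bᴴ * (Wm⁻¹)ᴴ * Q * B * Bᴴ * Q * Wm⁻¹ * B)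
    (Hk0t : Matrix (Fin m) (Fin m) ℂ)
    (hHk0t : Hk0t = Bkᴴ * (Wkm⁻¹)ᴴ * Qk * Bk * Bkᴴ * Qk * Wkm⁻¹ * Bk)
    (L Lk : Matrix (Fin m) (Fin m) ℂ)
    (hLtri : ∀ i j : Fin m, i < j → L i j = 0)
    (hLdiag : ∀ i : Fin m, 0 < (L i i).re ∧ (L i i).im = 0)
    (hLchol : L * Lᴴ = H0t)
    (hLktri : ∀ i j : Fin m, i < j → Lk i j = 0)
    (hLkdiag : ∀ i : Fin m, 0 < (Lk i i).re ∧ (Lk i i).im = 0)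
    (hLkchol : Lk * Lkᴴ = Hk0t)
    (H0 Hk0 : Matrix (Fin m) (Fin m) ℂ)
    (hH0 : H0 = L⁻¹ * (L⁻¹)ᴴ) (hHk0 : Hk0 = Lk⁻¹ * (Lk⁻¹)ᴴ)
    (H1t Hk1t : Matrix (Fin m) (Fin m) ℂ)
    (hH1t : H1t = L⁻¹ * (Bᴴ * (Wm⁻¹)ᴴ * Q * B) * (L⁻¹)ᴴ)
    (hHk1t : Hk1t = Lk⁻¹ * (Bkᴴ * (Wkm⁻¹)ᴴ * Qk * Bk) * (Lk⁻¹)ᴴ)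
    (H1 Hk1 : Matrix (Fin m) (Fin m) ℂ)
    (hH1 : H1 = Complex.I • (H1t - H1tᴴ)) (hHk1 : Hk1 = Complex.I • (Hk1t - Hk1tᴴ)) :
    L = Lk ∧ H0 = Hk0 ∧ H1 = Hk1 := by
  have hVinj : Function.Injective V.mulVec := fun x y hxy => by
    simpa [mulVec_mulVec, hV] using congrArg (Vᴴ *ᵥ ·) hxy
  have hQkpd : Qk.PosDef := hQk ▸ hQ.conjTranspose_mul_mul_same hVinj
  have hQkdet : IsUnit (Vᴴ * Q * V).det := hQk ▸ (isUnit_iff_isUnit_det _).mp hQkpd.isUnit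
  have hWkV : Wkᴴ * V = 1 := hWk ▸ conjTranspose_mul_inv_mul_self hQkdet
  have hWkQ : Wk * (Vᴴ * Q * V) = Q * V := hWk ▸ nonsing_inv_mul_cancel_right _ _ hQkdet
  have hWkm_proj : Wkm = Wkᴴ * Wm * V := by
    rw [hWkm, hWm, conjTranspose_mul_sub_smul_one_mul _ hWkV hWkQ, hJk, hRk, hQk]
    simp only [Matrix.mul_sub, Matrix.sub_mul]
  obtain ⟨Z, hZ⟩ := hincl1
  have hmoment : Bkᴴ * Qk * Wkm⁻¹ * Bk = Bᴴ * Q * Wm⁻¹ * B := by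
    rw [hBk, hQk, hWkm_proj]
    exact conjTranspose_mul_mul_inv_mul_eq hWinv (hWkm_proj ▸ hWkinv) hWkQ hZ
  have hmoment_adj : Bkᴴ * (Wkm⁻¹)ᴴ * Qk * Bk = Bᴴ * (Wm⁻¹)ᴴ * Q * B := by
    simpa only [conjTranspose_mul, conjTranspose_conjTranspose, hQkpd.isHermitian.eq,
      hQ.isHermitian.eq, Matrix.mul_assoc] using congrArg conjTranspose hmoment
  have hH0t_eq : H0t = Hk0t := by
    rw [hH0t, hHk0t]
    calc _ = (Bᴴ * (Wm⁻¹)ᴴ * Q * B) * (Bᴴ * Q * Wm⁻¹ * B) := by simp only [Matrix.mul_assoc]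
      _ = _ := by rw [← hmoment, ← hmoment_adj]; simp only [Matrix.mul_assoc]
  have hLLk : L = Lk :=
    IsLowerTriangular.eq_of_mul_conjTranspose_eq (fun i j h => hLtri i j h)
      (fun i j h => hLktri i j h) (fun i => Complex.pos_iff.mpr ⟨(hLdiag i).1, (hLdiag i).2.symm⟩)
      (fun i => Complex.pos_iff.mpr ⟨(hLkdiag i).1, (hLkdiag i).2.symm⟩)
      (hLchol.trans (hH0t_eq.trans hLkchol.symm))
  refine ⟨hLLk, by rw [hH0, hHk0, hLLk], ?_⟩
  rw [hH1, hHk1, hH1t, hHk1t, hLLk, hmoment_adj]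

/-- Under the subspace inclusions, and with the first `m` columns of `V_k` spanning the column
space of `W(iω̂)⁻¹B`, the Cholesky factors of the full and the reduced problem coincide:
`L = L_k`, hence `H₀ = H_{k,0}` and `H₁ = H_{k,1}`. -/
theorem interpolation_cholesky_factors
    {n m k : ℕ} (hmk : m ≤ k)
    (J R Q : Matrix (Fin n) (Fin n) ℂ)
    (hJ : Jᴴ = -J) (hR : R.PosSemidef) (hQ : Q.PosDef)
    (B : Matrix (Fin n) (Fin m) ℂ) (hBrk : B.rank = m)
    (omg : ℝ)
    (Wm : Matrix (Fin n) (Fin n) ℂ)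
    (hWm : Wm = (J - R) * Q - (Complex.I * (omg : ℂ)) • 1)
    (hWinv : IsUnit Wm.det)
    (V : Matrix (Fin n) (Fin k) ℂ) (hV : Vᴴ * V = 1)
    (hincl1 : ∃ Z : Matrix (Fin k) (Fin m) ℂ, V * Z = Wm⁻¹ * B)
    (hincl2 : ∃ Z : Matrix (Fin k) (Fin m) ℂ, V * Z = (Wm⁻¹ ^ 2) * B)
    (hVt : LinearMap.range (V.submatrix (id : Fin n → Fin n) (Fin.castLE hmk)).mulVecLin =
      LinearMap.range (Wm⁻¹ * B).mulVecLin)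
    (Wk : Matrix (Fin n) (Fin k) ℂ) (hWk : Wk = Q * V * (Vᴴ * Q * V)⁻¹)
    (Jk Rk Qk : Matrix (Fin k) (Fin k) ℂ)
    (hJk : Jk = Wkᴴ * J * Wk) (hRk : Rk = Wkᴴ * R * Wk) (hQk : Qk = Vᴴ * Q * V)
    (Bk : Matrix (Fin k) (Fin m) ℂ) (hBk : Bk = Wkᴴ * B)
    (Wkm : Matrix (Fin k) (Fin k) ℂ)
    (hWkm : Wkm = (Jk - Rk) * Qk - (Complex.I * (omg : ℂ)) • 1)
    (hWkinv : IsUnit Wkm.det)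
    (H0t : Matrix (Fin m) (Fin m) ℂ) (hH0t : H0t = Bᴴ * (Wm⁻¹)ᴴ * Q * B * Bᴴ * Q * Wm⁻¹ * B)
    (Hk0t : Matrix (Fin m) (Fin m) ℂ)
    (hHk0t : Hk0t = Bkᴴ * (Wkm⁻¹)ᴴ * Qk * Bk * Bkᴴ * Qk * Wkm⁻¹ * Bk)
    (hH0pd : H0t.PosDef) (hHk0pd : Hk0t.PosDef)
    (L Lk : Matrix (Fin m) (Fin m) ℂ)
    (hLtri : ∀ i j : Fin m, i < j → L i j = 0)
    (hLdiag : ∀ i : Fin m, 0 < (L i i).re ∧ (L i i).im = 0)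
    (hLchol : L * Lᴴ = H0t)
    (hLktri : ∀ i j : Fin m, i < j → Lk i j = 0)
    (hLkdiag : ∀ i : Fin m, 0 < (Lk i i).re ∧ (Lk i i).im = 0)
    (hLkchol : Lk * Lkᴴ = Hk0t)
    (H0 Hk0 : Matrix (Fin m) (Fin m) ℂ)
    (hH0 : H0 = L⁻¹ * (L⁻¹)ᴴ) (hHk0 : Hk0 = Lk⁻¹ * (Lk⁻¹)ᴴ)
    (H1t Hk1t : Matrix (Fin m) (Fin m) ℂ)
    (hH1t : H1t = L⁻¹ * (Bᴴ * (Wm⁻¹)ᴴ * Q * B) * (L⁻¹)ᴴ)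
    (hHk1t : Hk1t = Lk⁻¹ * (Bkᴴ * (Wkm⁻¹)ᴴ * Qk * Bk) * (Lk⁻¹)ᴴ)
    (H1 Hk1 : Matrix (Fin m) (Fin m) ℂ)
    (hH1 : H1 = Complex.I • (H1t - H1tᴴ)) (hHk1 : Hk1 = Complex.I • (Hk1t - Hk1tᴴ)) :
    L = Lk ∧ H0 = Hk0 ∧ H1 = Hk1 :=
  interpolation_cholesky_factors_general J R Q hQ B omg Wm hWm hWinv V hV hincl1 Wk hWk Jk Rk Qk hJk
    hRk hQk Bk hBk Wkm hWkm hWkinv H0t hH0t Hk0t hHk0t L Lk hLtri hLdiag hLchol hLktri hLkdiag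
    hLkchol H0 Hk0 hH0 hHk0 H1t Hk1t hH1t hHk1t H1 Hk1 hH1 hHk1
end
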